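/- arXiv:1809.10341 — 2 statements merged into one kernel-verified Lean document; each statement's English description precedes it below -/
import Mathlib

section
/- The GAN objective value and Jensen–Shannon divergence satisfy D_GAN(P, Q) = 2·D_JS(P, Q) − log 4 for any two probability distributions P, Q on a finite set, where D_GAN(P,Q) = sup over discriminators D: S → (0,1) of E_{x~P}[log D(x)] + E_{x~Q}[log(1 − D(x))]. -/
open Finset

/-- Kullback–Leibler divergence between finite pmfs (convention `0 * log _ = 0`
is automatic since `Real.log 0 = 0`). -/
noncomputable def klDiv {S : Type*} [Fintype S] (P Q : S → ℝ) : ℝ :=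
  ∑ x, P x * Real.log (P x / Q x)

/-- Jensen–Shannon divergence. -/
noncomputable def jsDiv {S : Type*} [Fintype S] (P Q : S → ℝ) : ℝ :=
  (1 / 2) * klDiv P (fun x => (P x + Q x) / 2) +
  (1 / 2) * klDiv Q (fun x => (P x + Q x) / 2)

lemma dgi_pt_le (a b t : ℝ) (ha : 0 ≤ a) (hb : 0 ≤ b) (ht0 : 0 < t) (ht1 : t < 1) :
    a * Real.log t + b * Real.log (1 - t) ≤
      a * Real.log (a / (a + b)) + b * Real.log (b / (a + b)) := by
  rcases ha.eq_or_lt with rfl | ha'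
  · rcases hb.eq_or_lt with rfl | hb'
    · simp
    · have h1 : Real.log (1 - t) ≤ 0 := Real.log_nonpos (by linarith) (by linarith)
      have h2 : b * Real.log (1 - t) ≤ 0 := mul_nonpos_of_nonneg_of_nonpos hb h1
      simp only [zero_mul, zero_add, div_self hb'.ne', Real.log_one, mul_zero]
      linarith
  · rcases hb.eq_or_lt with rfl | hb'
    · have h1 : Real.log t ≤ 0 := Real.log_nonpos (by linarith) (by linarith)
      have h2 : a * Real.log t ≤ 0 := mul_nonpos_of_nonneg_of_nonpos ha h1
      simp only [add_zero, zero_mul, div_self ha'.ne', Real.log_one, mul_zero]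
      linarith
    · have hab : 0 < a + b := by linarith
      have k1 : Real.log (t * (a + b) / a) ≤ t * (a + b) / a - 1 :=
        Real.log_le_sub_one_of_pos (by positivity)
      have e1 : Real.log (t * (a + b) / a) = Real.log t - Real.log (a / (a + b)) := by
        rw [Real.log_div (by positivity) ha'.ne', Real.log_mul ht0.ne' hab.ne',
          Real.log_div ha'.ne' hab.ne']
        ring
      have k1' : a * Real.log t - a * Real.log (a / (a + b)) ≤ t * (a + b) - a := by
        have := mul_le_mul_of_nonneg_left k1 ha
        rw [e1] at this
        have harw : a * (t * (a + b) / a - 1) = t * (a + b) - a := by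
          field_simp
        rw [harw] at this
        linarith [this, mul_sub a (Real.log t) (Real.log (a / (a + b)))]
      have hpos2 : 0 < (1 - t) * (a + b) / b :=
        div_pos (mul_pos (by linarith) hab) hb'
      have k2 : Real.log ((1 - t) * (a + b) / b) ≤ (1 - t) * (a + b) / b - 1 :=
        Real.log_le_sub_one_of_pos hpos2
      have e2 : Real.log ((1 - t) * (a + b) / b) =
          Real.log (1 - t) - Real.log (b / (a + b)) := by
        rw [Real.log_div (mul_pos (show (0:ℝ) < 1 - t by linarith) hab).ne' hb'.ne',
          Real.log_mul (show (1:ℝ) - t ≠ 0 by linarith) hab.ne',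
          Real.log_div hb'.ne' hab.ne']
        ring
      have k2' : b * Real.log (1 - t) - b * Real.log (b / (a + b)) ≤
          (1 - t) * (a + b) - b := by
        have := mul_le_mul_of_nonneg_left k2 hb
        rw [e2] at this
        have harw : b * ((1 - t) * (a + b) / b - 1) = (1 - t) * (a + b) - b := by
          field_simp
        rw [harw] at this
        linarith [this, mul_sub b (Real.log (1 - t)) (Real.log (b / (a + b)))]
      nlinarith [k1', k2']

lemma dgi_half_term (a b : ℝ) (ha : 0 ≤ a) (hb : 0 ≤ b) :
    a * Real.log (a / ((a + b) / 2)) = a * Real.log 2 + a * Real.log (a / (a + b)) := by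
  rcases ha.eq_or_lt with rfl | ha'
  · simp
  · have hab : 0 < a + b := by linarith
    have : a / ((a + b) / 2) = 2 * (a / (a + b)) := by
      field_simp
    rw [this, Real.log_mul two_ne_zero (by positivity), mul_add]

lemma dgi_tendsto_aux (a c : ℝ) (ha : 0 ≤ a) (hac : a ≤ c) :
    Filter.Tendsto (fun ε : ℝ => a * Real.log ((a + ε) / (c + 2 * ε)))
      (nhdsWithin 0 (Set.Ioi 0)) (nhds (a * Real.log (a / c))) := by
  rcases ha.eq_or_lt with rfl | ha'
  · simp only [zero_mul]
    exact tendsto_const_nhds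
  · have hc : 0 < c := lt_of_lt_of_le ha' hac
    have hct : ContinuousAt (fun ε : ℝ => a * Real.log ((a + ε) / (c + 2 * ε))) 0 := by
      have hdiv : ContinuousAt (fun ε : ℝ => (a + ε) / (c + 2 * ε)) 0 := by
        apply ContinuousAt.div (by fun_prop) (by fun_prop)
        simp only [mul_zero, add_zero]
        exact hc.ne'
      have hval : (a + (0:ℝ)) / (c + 2 * 0) ≠ 0 := by
        simp only [add_zero, mul_zero]
        positivity
      exact continuousAt_const.mul (hdiv.log hval)
    have h := hct.tendsto.mono_left (nhdsWithin_le_nhds (s := Set.Ioi (0:ℝ)))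
    simpa using h

theorem dgi_stmt12 {S : Type*} [Fintype S]
    (P Q : S → ℝ) (hP : ∀ x, 0 ≤ P x) (hQ : ∀ x, 0 ≤ Q x)
    (hPsum : ∑ x, P x = 1) (hQsum : ∑ x, Q x = 1) :
    sSup {v : ℝ | ∃ D : S → ℝ, (∀ x, D x ∈ Set.Ioo (0 : ℝ) 1) ∧
        v = ∑ x, P x * Real.log (D x) + ∑ x, Q x * Real.log (1 - D x)} =
      2 * jsDiv P Q - Real.log 4 := by
  classical
  set V : ℝ := ∑ x, (P x * Real.log (P x / (P x + Q x)) +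
      Q x * Real.log (Q x / (P x + Q x))) with hV
  set A : Set ℝ := {v : ℝ | ∃ D : S → ℝ, (∀ x, D x ∈ Set.Ioo (0 : ℝ) 1) ∧
        v = ∑ x, P x * Real.log (D x) + ∑ x, Q x * Real.log (1 - D x)} with hA
  have hRHS : 2 * jsDiv P Q - Real.log 4 = V := by
    have h4 : Real.log 4 = 2 * Real.log 2 := by
      rw [show (4:ℝ) = 2 ^ 2 by norm_num, Real.log_pow]
      push_cast; ring
    have hPpart : ∑ x, P x * Real.log (P x / ((P x + Q x) / 2)) =
        Real.log 2 + ∑ x, P x * Real.log (P x / (P x + Q x)) := by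
      have : ∀ x, P x * Real.log (P x / ((P x + Q x) / 2)) =
          P x * Real.log 2 + P x * Real.log (P x / (P x + Q x)) :=
        fun x => dgi_half_term (P x) (Q x) (hP x) (hQ x)
      rw [Finset.sum_congr rfl (fun x _ => this x), Finset.sum_add_distrib,
        ← Finset.sum_mul, hPsum, one_mul]
    have hQpart : ∑ x, Q x * Real.log (Q x / ((P x + Q x) / 2)) =
        Real.log 2 + ∑ x, Q x * Real.log (Q x / (P x + Q x)) := by
      have : ∀ x, Q x * Real.log (Q x / ((P x + Q x) / 2)) =
          Q x * Real.log 2 + Q x * Real.log (Q x / (P x + Q x)) := by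
        intro x
        have := dgi_half_term (Q x) (P x) (hQ x) (hP x)
        rwa [add_comm (Q x) (P x)] at this
      rw [Finset.sum_congr rfl (fun x _ => this x), Finset.sum_add_distrib,
        ← Finset.sum_mul, hQsum, one_mul]
    simp only [jsDiv, klDiv, hV]
    rw [hPpart, hQpart, h4, Finset.sum_add_distrib]
    ring
  rw [hRHS]
  have hub : ∀ v ∈ A, v ≤ V := by
    rintro v ⟨D, hD, rfl⟩
    rw [← Finset.sum_add_distrib]
    apply Finset.sum_le_sum
    intro x _
    exact dgi_pt_le (P x) (Q x) (D x) (hP x) (hQ x) (hD x).1 (hD x).2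
  have hne : A.Nonempty := by
    refine ⟨_, fun _ => 1 / 2, fun x => ⟨by norm_num, by norm_num⟩, rfl⟩
  have hbdd : BddAbove A := ⟨V, hub⟩
  apply le_antisymm (csSup_le hne hub)
  -- lower bound: approach V
  have hmem : ∀ ε : ℝ, 0 < ε →
      (∑ x, (P x * Real.log ((P x + ε) / (P x + Q x + 2 * ε)) +
        Q x * Real.log ((Q x + ε) / (P x + Q x + 2 * ε)))) ∈ A := by
    intro ε hε
    have hden : ∀ x, 0 < P x + Q x + 2 * ε := by
      intro x; have := hP x; have := hQ x; linarith
    refine ⟨fun x => (P x + ε) / (P x + Q x + 2 * ε), fun x => ⟨?_, ?_⟩, ?_⟩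
    · exact div_pos (by linarith [hP x]) (hden x)
    · rw [div_lt_one (hden x)]
      have := hQ x; linarith
    · have h1t : ∀ x, 1 - (P x + ε) / (P x + Q x + 2 * ε) =
          (Q x + ε) / (P x + Q x + 2 * ε) := by
        intro x
        rw [eq_div_iff (hden x).ne', sub_mul, div_mul_cancel₀ _ (hden x).ne']
        ring
      simp only [h1t]
      rw [← Finset.sum_add_distrib]
  have htend : Filter.Tendsto
      (fun ε : ℝ => ∑ x, (P x * Real.log ((P x + ε) / (P x + Q x + 2 * ε)) +
        Q x * Real.log ((Q x + ε) / (P x + Q x + 2 * ε))))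
      (nhdsWithin 0 (Set.Ioi 0)) (nhds V) := by
    rw [hV]
    apply tendsto_finset_sum
    intro x _
    have h1 := dgi_tendsto_aux (P x) (P x + Q x) (hP x) (by linarith [hQ x])
    have h2' := dgi_tendsto_aux (Q x) (Q x + P x) (hQ x) (by linarith [hP x])
    simp only [add_comm (Q x) (P x)] at h2'
    exact h1.add h2'
  refine le_of_tendsto htend ?_
  filter_upwards [self_mem_nhdsWithin] with ε hε
  exact le_csSup hbdd (hmem ε hε)
end

section
/- Let p be a pmf on finite X and R : X → S. Let J be the joint pmf on X × S of (x, R(x)) for x ~ p, and let M be the product-of-marginals pmf M(x,s) = p(x)·q(s) where q = R∗p. Then the Bayes error of distinguishing J from M (balanced priors) is at most (1/2) Σ_{k} q(k)^2. -/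
open Finset

theorem dgi_stmt15 {X S : Type*} [Fintype X] [Fintype S] [DecidableEq S]
    (p : X → ℝ) (hp : ∀ x, 0 ≤ p x) (hsum : ∑ x, p x = 1)
    (R : X → S)
    (q : S → ℝ) (hq : ∀ s, q s = ∑ x ∈ univ.filter (fun x => R x = s), p x)
    (J M : X → S → ℝ)
    (hJ : ∀ x s, J x s = if R x = s then p x else 0)
    (hM : ∀ x s, M x s = p x * q s) :
    (1 / 2) * ∑ x, ∑ s, min (J x s) (M x s) ≤ (1 / 2) * ∑ k, (q k) ^ 2 := by
  have hq0 : ∀ s, 0 ≤ q s := by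
    intro s; rw [hq]; exact Finset.sum_nonneg fun x _ => hp x
  have key : ∑ x, ∑ s, min (J x s) (M x s) ≤ ∑ k, (q k) ^ 2 := by
    have step1 : ∀ x, ∑ s, min (J x s) (M x s) ≤ p x * q (R x) := by
      intro x
      have : ∑ s, min (J x s) (M x s)
          = ∑ s, if R x = s then min (p x) (p x * q s) else 0 := by
        apply Finset.sum_congr rfl
        intro s _
        rw [hJ, hM]
        by_cases h : R x = s
        · simp [h]
        · simp [h, min_eq_left (mul_nonneg (hp x) (hq0 s))]
      rw [this, Finset.sum_ite_eq (Finset.univ) (R x)]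
      simp only [Finset.mem_univ, if_true]
      exact min_le_right _ _
    calc ∑ x, ∑ s, min (J x s) (M x s) ≤ ∑ x, p x * q (R x) :=
          Finset.sum_le_sum fun x _ => step1 x
      _ = ∑ k, (q k) ^ 2 := by
          rw [← Finset.sum_fiberwise (Finset.univ) R (fun x => p x * q (R x))]
          apply Finset.sum_congr rfl
          intro k _
          rw [sq, hq k, Finset.sum_mul]
          apply Finset.sum_congr rfl
          intro x hx
          simp only [Finset.mem_filter] at hx
          rw [hx.2, hq]
      _ = ∑ k, (q k) ^ 2 := rfl
  linarith
end
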